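/- arXiv:1911.08255 — 4 statements merged into one kernel-verified Lean document; each statement's English description precedes it below -/
import Mathlib

section
/- If in addition S < A/c, then M* = √(A·S/c) − S is strictly positive and is the unique maximizer of u on [0, ∞): u(M*) ≥ u(M) for all M ≥ 0, with equality only when M = M*. -/
/-- If `S < A/c`, then `M* = √(A·S/c) − S` is strictly positive and is the unique
maximizer of `u(M) = A·M/(M + S) − c·M` on `[0, ∞)`: `u(M*) ≥ u(M)` for all `M ≥ 0`,
with equality only when `M = M*`. -/
theorem Mstar_unique_maximizer (A c S : ℝ) (hA : 0 < A) (hc : 0 < c) (hS : 0 < S)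
    (hSA : S < A / c) :
    0 < Real.sqrt (A * S / c) - S ∧
    (∀ M : ℝ, 0 ≤ M →
      A * M / (M + S) - c * M ≤
        A * (Real.sqrt (A * S / c) - S) / ((Real.sqrt (A * S / c) - S) + S)
          - c * (Real.sqrt (A * S / c) - S)) ∧
    (∀ M : ℝ, 0 ≤ M →
      A * M / (M + S) - c * M =
        A * (Real.sqrt (A * S / c) - S) / ((Real.sqrt (A * S / c) - S) + S)
          - c * (Real.sqrt (A * S / c) - S) →
      M = Real.sqrt (A * S / c) - S) := by
  set t := Real.sqrt (A * S / c) with ht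
  have h1 : 0 ≤ A * S / c := by positivity
  have ht2 : t ^ 2 = A * S / c := Real.sq_sqrt h1
  have htc : c * t ^ 2 = A * S := by field_simp at ht2 ⊢; linarith
  have ht0 : 0 ≤ t := Real.sqrt_nonneg _
  have hAc : c * S < A := by rw [lt_div_iff₀ hc] at hSA; linarith
  have hS2 : S * S < A * S / c := by
    rw [lt_div_iff₀ hc]; nlinarith
  have hts : S < t := by nlinarith
  have htpos : 0 < t := lt_trans hS hts
  have htS : (t - S) + S = t := by ring
  have key : ∀ M : ℝ, 0 ≤ M →
      A * (t - S) / ((t - S) + S) - c * (t - S) - (A * M / (M + S) - c * M)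
        = c * (M + S - t) ^ 2 / (M + S) := by
    intro M hM
    have hMS : (0:ℝ) < M + S := by linarith
    rw [htS]
    field_simp
    nlinarith [htc, mul_pos hMS htpos, sq_nonneg (M + S - t)]
  refine ⟨by linarith, ?_, ?_⟩
  · intro M hM
    have hMS : (0:ℝ) < M + S := by linarith
    have h := key M hM
    have hpos : 0 ≤ c * (M + S - t) ^ 2 / (M + S) := by positivity
    linarith
  · intro M hM heq
    have hMS : (0:ℝ) < M + S := by linarith
    have h := key M hM
    rw [heq, sub_self] at h
    field_simp at h
    replace h : c = 0 ∨ M + S - t = 0 := by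
      have h0 : c * (M + S - t) ^ 2 = 0 := by linarith
      rcases mul_eq_zero.mp h0 with h'' | h''
      · exact Or.inl h''
      · exact Or.inr ((pow_eq_zero_iff two_ne_zero).mp h'')
    rcases h with h' | h'
    · exact absurd h' (ne_of_gt hc)
    · linarith
end

section
/- Suppose M : Fin N → ℝ satisfies M_i > 0 for all i and the first-order conditions (Σ_{j ≠ i} M_j)/(Σ_{j} M_j)² = a_i for every i. Then the total nonce length satisfies Σ_{j} M_j = (N − 1)/(Σ_{j} a_j). -/
open Finset

/-- If `M i > 0` for all `i` and the first-order conditions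
`(Σ_{j ≠ i} M j)/(Σ_j M j)² = a i` hold for every `i`, where
`a i = c·2^h/(B + r·s i)`, then `Σ_j M j = (N − 1)/(Σ_j a j)`. -/
theorem total_nonce_length (N : ℕ) (hN : 2 ≤ N) (s : Fin N → ℝ) (hs : ∀ i, 0 < s i)
    (B r c h : ℝ) (hB : 0 < B) (hr : 0 < r) (hc : 0 < c)
    (a : Fin N → ℝ) (ha : ∀ i, a i = c * (2 : ℝ) ^ h / (B + r * s i))
    (M : Fin N → ℝ) (hM : ∀ i, 0 < M i)
    (hFOC : ∀ i, (∑ j ∈ univ \ {i}, M j) / (∑ j, M j) ^ 2 = a i) :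
    ∑ j, M j = ((N : ℝ) - 1) / (∑ j, a j) := by
  have hNpos : 0 < N := by omega
  have hT : 0 < ∑ j, M j :=
    Finset.sum_pos (fun i _ => hM i) (univ_nonempty_iff.mpr ⟨⟨0, hNpos⟩⟩)
  set T := ∑ j, M j with hTdef
  have hsum : ∀ i : Fin N, ∑ j ∈ univ \ {i}, M j = T - M i := by
    intro i
    have := Finset.sum_sdiff_eq_sub (f := M) (singleton_subset_iff.mpr (mem_univ i))
    simpa [hTdef] using this
  have hFOC' : ∀ i : Fin N, T - M i = a i * T ^ 2 := by
    intro i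
    have := hFOC i
    rw [hsum i, div_eq_iff (by positivity)] at this
    exact this
  have hsumFOC : (N : ℝ) * T - T = (∑ j, a j) * T ^ 2 := by
    have : ∑ i : Fin N, (T - M i) = ∑ i : Fin N, a i * T ^ 2 := by
      exact Finset.sum_congr rfl fun i _ => hFOC' i
    simpa [Finset.sum_sub_distrib, ← Finset.sum_mul, mul_comm] using this
  have hapos : 0 < ∑ j, a j := by
    apply Finset.sum_pos _ (univ_nonempty_iff.mpr ⟨⟨0, hNpos⟩⟩)
    intro i _
    rw [ha i]
    exact div_pos (by positivity) (add_pos hB (mul_pos hr (hs i)))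
  have key : ((N : ℝ) - 1) = (∑ j, a j) * T := by
    have h2 : ((N : ℝ) - 1) * T = (∑ j, a j) * T * T := by ring_nf; ring_nf at hsumFOC; linarith
    exact mul_right_cancel₀ (ne_of_gt hT) h2
  rw [key, mul_comm, mul_div_assoc, div_self (ne_of_gt hapos), mul_one]
end

section
/- (Theorem 3, Nash equilibrium formula.) Suppose M : Fin N → ℝ satisfies M_i > 0 for all i and the first-order conditions (Σ_{j ≠ i} M_j)/(Σ_{j} M_j)² = a_i for every i. Then for every i, M_i = (N − 1)/(Σ_{j} a_j) − ((N − 1)/(Σ_{j} a_j))²·a_i. -/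
/-!
Writing `S = ∑ j, M j`, the first-order condition of user `i` reads `S - M i = a i * S²`.
Summing over all `N` users gives `(N - 1) * S = (∑ j, a j) * S²`, so the total `S` is
`(N - 1) / ∑ j, a j`, and each `M i = S - a i * S²` follows.
-/

open Finset

theorem eq_sub_mul_sq_of_sub_div_sq_eq {K : Type*} [Field K] {S m a : K} (hS : S ≠ 0)
    (h : (S - m) / S ^ 2 = a) : m = S - a * S ^ 2 := by
  rw [← h, div_mul_cancel₀ _ (pow_ne_zero 2 hS)]
  ring

section FirstOrderConditions

variable {ι K : Type*} [Fintype ι] [Field K]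

theorem sum_eq_div_of_forall_eq_sub_mul_sq {M a : ι → K} (hS : ∑ j, M j ≠ 0)
    (hcard : (Fintype.card ι : K) ≠ 1) (h : ∀ i, M i = ∑ j, M j - a i * (∑ j, M j) ^ 2) :
    ∑ j, M j = (Fintype.card ι - 1) / ∑ j, a j := by
  set S := ∑ j, M j
  have hsum : S = Fintype.card ι * S - (∑ j, a j) * S ^ 2 := calc
    S = ∑ j, (S - a j * S ^ 2) := sum_congr rfl fun j _ => h j
    _ = Fintype.card ι * S - (∑ j, a j) * S ^ 2 := by
      rw [sum_sub_distrib, sum_const, card_univ, nsmul_eq_mul, sum_mul]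
  have hlin : (Fintype.card ι : K) - 1 = (∑ j, a j) * S :=
    mul_right_cancel₀ hS (by linear_combination -hsum)
  have hA : ∑ j, a j ≠ 0 := by
    rintro hA
    rw [hA, zero_mul, sub_eq_zero] at hlin
    exact hcard hlin
  rw [hlin, mul_div_cancel_left₀ _ hA]

variable [DecidableEq ι]

theorem eq_of_forall_sum_sdiff_div_sq_eq {M a : ι → K} (hS : ∑ j, M j ≠ 0)
    (hcard : (Fintype.card ι : K) ≠ 1)
    (hFOC : ∀ i, (∑ j ∈ univ \ {i}, M j) / (∑ j, M j) ^ 2 = a i) (i : ι) :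
    M i = (Fintype.card ι - 1) / (∑ j, a j)
      - ((Fintype.card ι - 1) / (∑ j, a j)) ^ 2 * a i := by
  have hbest : ∀ i, M i = ∑ j, M j - a i * (∑ j, M j) ^ 2 := fun i => by
    refine eq_sub_mul_sq_of_sub_div_sq_eq hS ?_
    rw [← hFOC i, sum_sdiff_eq_sub (subset_univ _), sum_singleton]
  rw [hbest i, sum_eq_div_of_forall_eq_sub_mul_sq hS hcard hbest]
  ring

end FirstOrderConditions

theorem nash_equilibrium_formula_general (N : ℕ) (hN : 2 ≤ N)
    (a : Fin N → ℝ)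
    (M : Fin N → ℝ) (hM : ∀ i, 0 < M i)
    (hFOC : ∀ i, (∑ j ∈ univ \ {i}, M j) / (∑ j, M j) ^ 2 = a i) :
    ∀ i, M i = ((N : ℝ) - 1) / (∑ j, a j)
      - (((N : ℝ) - 1) / (∑ j, a j)) ^ 2 * a i := by
  intro i
  have hS : ∑ j, M j ≠ 0 := (sum_pos (fun j _ => hM j) ⟨i, mem_univ i⟩).ne'
  have hcard : (Fintype.card (Fin N) : ℝ) ≠ 1 := by
    rw [Fintype.card_fin]
    exact_mod_cast (by omega : N ≠ 1)
  simpa only [Fintype.card_fin] using eq_of_forall_sum_sdiff_div_sq_eq hS hcard hFOC i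

/-- (Theorem 3, Nash equilibrium formula.) If `M i > 0` for all `i` and the
first-order conditions `(Σ_{j ≠ i} M j)/(Σ_j M j)² = a i` hold for every `i`,
where `a i = c·2^h/(B + r·s i)`, then for every `i`,
`M i = (N − 1)/(Σ_j a j) − ((N − 1)/(Σ_j a j))²·a i`. -/
theorem nash_equilibrium_formula (N : ℕ) (hN : 2 ≤ N) (s : Fin N → ℝ) (hs : ∀ i, 0 < s i)
    (B r c h : ℝ) (hB : 0 < B) (hr : 0 < r) (hc : 0 < c)
    (a : Fin N → ℝ) (ha : ∀ i, a i = c * (2 : ℝ) ^ h / (B + r * s i))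
    (M : Fin N → ℝ) (hM : ∀ i, 0 < M i)
    (hFOC : ∀ i, (∑ j ∈ univ \ {i}, M j) / (∑ j, M j) ^ 2 = a i) :
    ∀ i, M i = ((N : ℝ) - 1) / (∑ j, a j)
      - (((N : ℝ) - 1) / (∑ j, a j)) ^ 2 * a i :=
  nash_equilibrium_formula_general N hN a M hM hFOC
end

section
/- (Converse of Theorem 3.) Set S* = (N − 1)/(Σ_{j} a_j) and define M_i = S* − (S*)²·a_i for each i. Then Σ_{j} M_j = S*, and the first-order conditions (Σ_{j ≠ i} M_j)/(Σ_{j} M_j)² = a_i hold for every i. -/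
open Finset

/-- (Converse of Theorem 3.) With `S* = (N − 1)/(Σ_j a j)` and
`M i = S* − (S*)²·a i`, where `a i = c·2^h/(B + r·s i)`, one has
`Σ_j M j = S*` and the first-order conditions
`(Σ_{j ≠ i} M j)/(Σ_j M j)² = a i` hold for every `i`. -/
theorem nash_equilibrium_formula_converse (N : ℕ) (hN : 2 ≤ N)
    (s : Fin N → ℝ) (hs : ∀ i, 0 < s i)
    (B r c h : ℝ) (hB : 0 < B) (hr : 0 < r) (hc : 0 < c)
    (a : Fin N → ℝ) (ha : ∀ i, a i = c * (2 : ℝ) ^ h / (B + r * s i))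
    (Sstar : ℝ) (hSstar : Sstar = ((N : ℝ) - 1) / (∑ j, a j))
    (M : Fin N → ℝ) (hMdef : ∀ i, M i = Sstar - Sstar ^ 2 * a i) :
    (∑ j, M j) = Sstar ∧
    ∀ i, (∑ j ∈ univ \ {i}, M j) / (∑ j, M j) ^ 2 = a i := by
  have hapos : ∀ i, 0 < a i := fun i => by
    rw [ha i]
    exact div_pos (mul_pos hc (Real.rpow_pos_of_pos two_pos h))
      (add_pos hB (mul_pos hr (hs i)))
  have hsum : 0 < ∑ j, a j :=
    Finset.sum_pos (fun j _ => hapos j) ⟨⟨0, by omega⟩, mem_univ _⟩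
  have hN1 : (0:ℝ) < (N:ℝ) - 1 := by
    have : (2:ℝ) ≤ N := by exact_mod_cast hN
    linarith
  have hSpos : 0 < Sstar := hSstar ▸ div_pos hN1 hsum
  have hkey : Sstar * ∑ j, a j = (N:ℝ) - 1 := by
    rw [hSstar, div_mul_cancel₀ _ hsum.ne']
  have hsumM : (∑ j, M j) = Sstar := by
    simp only [hMdef, Finset.sum_sub_distrib, Finset.sum_const, ← Finset.mul_sum,
      card_univ, Fintype.card_fin, nsmul_eq_mul]
    have : Sstar ^ 2 * ∑ j, a j = Sstar * ((N:ℝ) - 1) := by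
      rw [pow_two, mul_assoc, hkey]
    rw [this]; ring
  refine ⟨hsumM, fun i => ?_⟩
  have hsplit : (∑ j ∈ univ \ {i}, M j) = (∑ j, M j) - M i := by
    rw [eq_sub_iff_add_eq, Finset.sum_sdiff_eq_sub (by simp), Finset.sum_singleton]
    ring
  rw [hsplit, hsumM, hMdef i]
  field_simp
  ring
end
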